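/- Let β ∈ [0,2], ρ ∈ (-2-β, 0), and M ∈ 𝔐^β on ℝ^d. Let σ ≠ 0 be a finite Borel measure on the unit sphere S^{d-1} and ℓ a function slowly varying at infinity. If for every Borel set D ⊆ S^{d-1} with σ(∂D) = 0, M(|x| > t, x/|x| ∈ D) ~ σ(D) t^{-(ρ+2+β)} ℓ(1/t) as t ↓ 0, then for every such D, M^β(|x| > t, x/|x| ∈ D) ~ ((ρ+2+β)/|ρ|) σ(D) t^ρ ℓ(t) as t → ∞. -/

import Mathlib

/-!
Push `M`, restricted to the directions in `D`, forward under `x ↦ |x|` to a measure `ν` on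
`(0, ∞)`. Then `M^β(|x| > t, x/|x| ∈ D) = ∫_{(0, 1/t)} r^{2+β} ν(dr)`, while the hypothesis says
that the tail `ν(r > s)` is regularly varying at `0` with index `-α`, `α = ρ + 2 + β`; the claim
is Karamata's theorem for such tails. For `q < 1`, cutting `(0, c]` into the blocks
`(q^{k+1} c, q^k c]` squeezes the integral between `q^{2+β} S` and `S`,
`S = Σ_k (q^k c)^{2+β} ν(block k)`. Potter-type bounds `ν(r > q^k c) ≤ K^k ν(r > c)` make dominated
convergence applicable to `S / (c^{|ρ|} ℓ(1/c))`, whose limit is a geometric series; it tends to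
`α σ(D) / |ρ|` as `q → 1`. Potter bounds need a positive limit, so the case `σ(D) = 0` is obtained by
applying the positive case to `ν + ν'` and to `ν'`, with `ν'` the radial measure of all directions,
and subtracting.
-/

open MeasureTheory ENNReal Filter Topology Set

noncomputable section

abbrev Rd (d : ℕ) := EuclideanSpace ℝ (Fin d)

/-- The spherical inversion map `x ↦ x / |x|²` (sending `0` to `0`). -/
def sphInv {d : ℕ} (x : Rd d) : Rd d := (‖x‖ ^ 2)⁻¹ • x

/-- The β-inversion of a measure `M`:
`M^β(A) = ∫ 1_A(x/|x|²) |x|^{2+β} M(dx)`. -/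
def betaInv {d : ℕ} (β : ℝ) (M : Measure (Rd d)) : Measure (Rd d) :=
  Measure.map sphInv (M.withDensity fun x => ENNReal.ofReal (‖x‖ ^ (2 + β)))

/-- `M ∈ 𝔐^β`: `M({0}) = 0` and `∫ (|x|² ∧ |x|^β) M(dx) < ∞`. -/
def MemM {d : ℕ} (β : ℝ) (M : Measure (Rd d)) : Prop :=
  M {0} = 0 ∧ ∫⁻ x, ENNReal.ofReal (min (‖x‖ ^ (2 : ℝ)) (‖x‖ ^ β)) ∂M < ⊤

/-- The set `{x : |x| > t, x/|x| ∈ D}` for a set `D` of directions on the unit sphere. -/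
def cone {d : ℕ} (D : Set (Metric.sphere (0 : Rd d) 1)) (t : ℝ) : Set (Rd d) :=
  {x | t < ‖x‖ ∧ ∃ h : ‖x‖⁻¹ • x ∈ Metric.sphere (0 : Rd d) 1,
      (⟨‖x‖⁻¹ • x, h⟩ : Metric.sphere (0 : Rd d) 1) ∈ D}

open scoped Function

lemma tendsto_of_squeeze_family {α ι : Type*} {l : Filter α} {p : Filter ι} [p.NeBot]
    {f : α → ℝ} {g h : ι → α → ℝ} {A B : ι → ℝ} {T : ℝ}
    (hsq : ∀ᶠ i in p, (∀ᶠ x in l, g i x ≤ f x ∧ f x ≤ h i x) ∧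
      Tendsto (g i) l (𝓝 (A i)) ∧ Tendsto (h i) l (𝓝 (B i)))
    (hA : Tendsto A p (𝓝 T)) (hB : Tendsto B p (𝓝 T)) :
    Tendsto f l (𝓝 T) := by
  refine tendsto_order.2 ⟨fun y hy => ?_, fun y hy => ?_⟩
  · obtain ⟨i, ⟨hfi, hgi, -⟩, hAi⟩ := (hsq.and (hA.eventually (lt_mem_nhds hy))).exists
    filter_upwards [hfi, hgi.eventually (lt_mem_nhds hAi)] with x hx hgx
    exact hgx.trans_le hx.1
  · obtain ⟨i, ⟨hfi, -, hhi⟩, hBi⟩ := (hsq.and (hB.eventually (gt_mem_nhds hy))).exists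
    filter_upwards [hfi, hhi.eventually (gt_mem_nhds hBi)] with x hx hhx
    exact hx.2.trans_lt hhx

lemma tendsto_rpow_sub_one_div_sub_one (q : ℝ) :
    Tendsto (fun x : ℝ => (x ^ q - 1) / (x - 1)) (𝓝[<] 1) (𝓝 q) := by
  have hd : HasDerivAt (fun x : ℝ => x ^ q) q 1 := by
    simpa using Real.hasDerivAt_rpow_const (x := 1) (p := q) (Or.inl one_ne_zero)
  refine ((hasDerivAt_iff_tendsto_slope.mp hd).mono_left
    (nhdsWithin_mono 1 fun x hx => ne_of_lt hx)).congr fun x => ?_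
  simp [slope_def_field]

lemma tendsto_rpow_neg_sub_one_div_one_sub_rpow {a b : ℝ} (hb : 0 < b) :
    Tendsto (fun x : ℝ => (x ^ (-a) - 1) / (1 - x ^ b)) (𝓝[<] 1) (𝓝 (a / b)) := by
  have h := ((tendsto_rpow_sub_one_div_sub_one (-a)).div
    (tendsto_rpow_sub_one_div_sub_one b) hb.ne').neg
  rw [neg_div, neg_neg] at h
  refine h.congr' ?_
  filter_upwards [Ioo_mem_nhdsLT (show (0 : ℝ) < 1 by norm_num)] with x hx
  simp only [Pi.div_apply]
  have hx1 : x - 1 ≠ 0 := by linarith [hx.2]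
  rw [div_div_div_cancel_right₀ hx1, ← neg_sub (x ^ b) 1, div_neg]

structure IsSlowlyVaryingAtZero (ℒ : ℝ → ℝ) : Prop where
  pos : ∀ s, 0 < s → 0 < ℒ s
  tendsto_div : ∀ a, 0 < a → Tendsto (fun c => ℒ (a * c) / ℒ c) (𝓝[>] 0) (𝓝 1)

lemma isSlowlyVaryingAtZero_one_div {ℓ : ℝ → ℝ} (hpos : ∀ t, 0 < t → 0 < ℓ t)
    (hℓ : ∀ x, 0 < x → Tendsto (fun t => ℓ (t * x) / ℓ t) atTop (𝓝 1)) :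
    IsSlowlyVaryingAtZero fun s => ℓ (1 / s) where
  pos s hs := hpos _ (one_div_pos.2 hs)
  tendsto_div a ha := by
    refine ((hℓ a⁻¹ (inv_pos.2 ha)).comp tendsto_inv_nhdsGT_zero).congr fun c => ?_
    simp only [Function.comp_apply, one_div, mul_inv, mul_comm]

namespace IsSlowlyVaryingAtZero

variable {ℒ f g : ℝ → ℝ} {b L : ℝ}

lemma tendsto_comp_mul (hℒ : IsSlowlyVaryingAtZero ℒ)
    (hf : Tendsto (fun s => f s / (s ^ b * ℒ s)) (𝓝[>] 0) (𝓝 L)) {q : ℝ} (hq : 0 < q) :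
    Tendsto (fun s => f (q * s) / (s ^ b * ℒ s)) (𝓝[>] 0) (𝓝 (L * q ^ b)) := by
  have hmul : Tendsto (fun s => q * s) (𝓝[>] 0) (𝓝[>] 0) :=
    tendsto_nhdsWithin_iff.2
      ⟨((continuous_const_mul q).tendsto' 0 0 (mul_zero q)).mono_left nhdsWithin_le_nhds,
        eventually_nhdsWithin_of_forall fun s hs => mul_pos hq hs⟩
  have h := ((hf.comp hmul).mul (hℒ.tendsto_div q hq)).mul_const (q ^ b)
  rw [mul_one] at h
  refine h.congr' ?_
  filter_upwards [self_mem_nhdsWithin] with s (hs : 0 < s)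
  have := hℒ.pos s hs
  have := hℒ.pos (q * s) (mul_pos hq hs)
  have := Real.rpow_pos_of_pos hs b
  have := Real.rpow_pos_of_pos hq b
  simp only [Function.comp_apply, Real.mul_rpow hq.le hs.le]
  field_simp

lemma eventually_pos (hℒ : IsSlowlyVaryingAtZero ℒ)
    (hf : Tendsto (fun s => f s / (s ^ b * ℒ s)) (𝓝[>] 0) (𝓝 L)) (hL : 0 < L) :
    ∀ᶠ s in 𝓝[>] 0, 0 < f s := by
  filter_upwards [hf.eventually (lt_mem_nhds hL), self_mem_nhdsWithin] with s hs (hs0 : 0 < s)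
  exact (div_pos_iff_of_pos_right (mul_pos (Real.rpow_pos_of_pos hs0 b) (hℒ.pos s hs0))).1 hs

lemma tendsto_of_le_of_le_comp_mul (hℒ : IsSlowlyVaryingAtZero ℒ)
    (hf : Tendsto (fun s => f s / (s ^ b * ℒ s)) (𝓝[>] 0) (𝓝 L))
    (hfg : ∀ q ∈ Ioo (0 : ℝ) 1, ∀ᶠ s in 𝓝[>] 0, f (q * s) ≤ g s ∧ g s ≤ f s) :
    Tendsto (fun s => g s / (s ^ b * ℒ s)) (𝓝[>] 0) (𝓝 L) := by
  refine tendsto_of_squeeze_family (p := 𝓝[<] 1)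
    (g := fun q s => f (q * s) / (s ^ b * ℒ s)) (h := fun _ s => f s / (s ^ b * ℒ s))
    (A := fun q => L * q ^ b) (B := fun _ => L) ?_ ?_ tendsto_const_nhds
  · filter_upwards [Ioo_mem_nhdsLT (show (0 : ℝ) < 1 by norm_num)] with q hq
    refine ⟨?_, hℒ.tendsto_comp_mul hf hq.1, hf⟩
    filter_upwards [hfg q hq, self_mem_nhdsWithin] with s hs (hs0 : 0 < s)
    have hden := mul_pos (Real.rpow_pos_of_pos hs0 b) (hℒ.pos s hs0)
    exact ⟨div_le_div_of_nonneg_right hs.1 hden.le, div_le_div_of_nonneg_right hs.2 hden.le⟩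
  · simpa using (tendsto_const_nhds (x := L)).mul
      ((Real.continuousAt_rpow_const 1 b (Or.inl one_ne_zero)).tendsto.mono_left
        nhdsWithin_le_nhds)

lemma eventually_forall_le_pow_mul (hℒ : IsSlowlyVaryingAtZero ℒ)
    (hf : Tendsto (fun s => f s / (s ^ b * ℒ s)) (𝓝[>] 0) (𝓝 L)) (hL : 0 < L)
    {q K : ℝ} (hq : q ∈ Ioo (0 : ℝ) 1) (hK : q ^ b < K) :
    ∀ᶠ c in 𝓝[>] 0, ∀ k : ℕ, f (q ^ k * c) ≤ K ^ k * f c := by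
  have hratio : Tendsto (fun c => f (q * c) / f c) (𝓝[>] 0) (𝓝 (q ^ b)) := by
    have h := (hℒ.tendsto_comp_mul hf hq.1).div hf hL.ne'
    rw [mul_div_cancel_left₀ _ hL.ne'] at h
    refine h.congr' ?_
    filter_upwards [self_mem_nhdsWithin] with c (hc : 0 < c)
    have := mul_pos (Real.rpow_pos_of_pos hc b) (hℒ.pos c hc)
    simp only [Pi.div_apply, div_div_div_cancel_right₀ this.ne']
  have hstep : ∀ᶠ c in 𝓝[>] 0, f (q * c) ≤ K * f c := by
    filter_upwards [hratio.eventually (gt_mem_nhds hK), hℒ.eventually_pos hf hL] with c h1 h2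
    exact ((div_lt_iff₀ h2).1 h1).le
  obtain ⟨c₁, hc₁, hsub⟩ := mem_nhdsGT_iff_exists_Ioo_subset.1 hstep
  have hK0 : 0 ≤ K := (Real.rpow_nonneg hq.1.le b).trans hK.le
  filter_upwards [Ioo_mem_nhdsGT hc₁] with c hc k
  induction k with
  | zero => simp
  | succ k ih =>
    have hmem : q ^ k * c ∈ Ioo 0 c₁ :=
      ⟨mul_pos (pow_pos hq.1 k) hc.1,
        (mul_le_of_le_one_left hc.1.le (pow_le_one₀ hq.1.le hq.2.le)).trans_lt hc.2⟩
    calc f (q ^ (k + 1) * c) = f (q * (q ^ k * c)) := by ring_nf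
      _ ≤ K * f (q ^ k * c) := hsub hmem
      _ ≤ K * (K ^ k * f c) := mul_le_mul_of_nonneg_left ih hK0
      _ = K ^ (k + 1) * f c := by ring

end IsSlowlyVaryingAtZero

lemma pow_succ_mul_le_pow_mul {q c : ℝ} (hq : q ∈ Ioo (0 : ℝ) 1) (hc : 0 ≤ c) (k : ℕ) :
    q ^ (k + 1) * c ≤ q ^ k * c :=
  mul_le_mul_of_nonneg_right (pow_le_pow_of_le_one hq.1.le hq.2.le k.le_succ) hc

section BlockSums

variable {F ℒ : ℝ → ℝ} {a p L q : ℝ}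

lemma block_term_eq (hq : 0 < q) {c : ℝ} (hc : 0 < c) (hℒc : ℒ c ≠ 0) (k : ℕ) :
    (q ^ k * c) ^ p * (F (q ^ (k + 1) * c) - F (q ^ k * c)) / (c ^ (p - a) * ℒ c) =
      (q ^ p) ^ k * (F (q ^ (k + 1) * c) / (c ^ (-a) * ℒ c) - F (q ^ k * c) / (c ^ (-a) * ℒ c)) := by
  have hsplit : c ^ p = c ^ (p - a) * c ^ a := by rw [← Real.rpow_add hc]; ring_nf
  rw [Real.mul_rpow (pow_pos hq k).le hc.le, ← Real.rpow_natCast, ← Real.rpow_mul hq.le,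
    mul_comm (k : ℝ), Real.rpow_mul hq.le, Real.rpow_natCast, hsplit, Real.rpow_neg hc.le]
  have := (Real.rpow_pos_of_pos hc (p - a)).ne'
  have := (Real.rpow_pos_of_pos hc a).ne'
  field_simp

lemma tendsto_block_term (hℒ : IsSlowlyVaryingAtZero ℒ)
    (hF : Tendsto (fun s => F s / (s ^ (-a) * ℒ s)) (𝓝[>] 0) (𝓝 L)) (hq : 0 < q) (k : ℕ) :
    Tendsto (fun c => (q ^ k * c) ^ p * (F (q ^ (k + 1) * c) - F (q ^ k * c)) / (c ^ (p - a) * ℒ c))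
      (𝓝[>] 0) (𝓝 (L * (q ^ (-a) - 1) * (q ^ (p - a)) ^ k)) := by
  have hlim : ∀ j : ℕ, Tendsto (fun c => F (q ^ j * c) / (c ^ (-a) * ℒ c)) (𝓝[>] 0)
      (𝓝 (L * (q ^ (-a)) ^ j)) := fun j => by
    simpa [← Real.rpow_natCast, ← Real.rpow_mul hq.le, mul_comm] using
      hℒ.tendsto_comp_mul hF (pow_pos hq j)
  have hval : (q ^ p) ^ k * (L * (q ^ (-a)) ^ (k + 1) - L * (q ^ (-a)) ^ k) =
      L * (q ^ (-a) - 1) * (q ^ (p - a)) ^ k := by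
    rw [sub_eq_add_neg p a, Real.rpow_add hq]; ring
  rw [← hval]
  refine (((hlim (k + 1)).sub (hlim k)).const_mul _).congr' ?_
  filter_upwards [self_mem_nhdsWithin] with c (hc : 0 < c)
  rw [block_term_eq hq hc (hℒ.pos c hc).ne']

lemma eventually_norm_block_term_le (hℒ : IsSlowlyVaryingAtZero ℒ)
    (hF : Tendsto (fun s => F s / (s ^ (-a) * ℒ s)) (𝓝[>] 0) (𝓝 L)) (hL : 0 < L)
    (hF0 : ∀ s, 0 ≤ F s) (hFanti : AntitoneOn F (Ioi 0)) (hap : a < p)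
    (hq : q ∈ Ioo (0 : ℝ) 1) :
    ∃ C, ∀ᶠ c in 𝓝[>] 0, ∀ k : ℕ,
      ‖(q ^ k * c) ^ p * (F (q ^ (k + 1) * c) - F (q ^ k * c)) / (c ^ (p - a) * ℒ c)‖ ≤
        C * (q ^ ((p - a) / 2)) ^ k := by
  -- any `K` with `q ^ (-a) < K < q ^ (-p)` would do: the bound decays like `(q ^ p * K) ^ k`
  set K := q ^ (-a - (p - a) / 2)
  have hK : q ^ (-a) < K := Real.rpow_lt_rpow_of_exponent_gt hq.1 hq.2 (by linarith)
  have hK0 : 0 < K := Real.rpow_pos_of_pos hq.1 _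
  have hqK : q ^ p * K = q ^ ((p - a) / 2) := by rw [← Real.rpow_add hq.1]; ring_nf
  refine ⟨K * (2 * L), ?_⟩
  filter_upwards [hℒ.eventually_forall_le_pow_mul hF hL hq hK,
    hF.eventually (gt_mem_nhds (by linarith : L < 2 * L)), self_mem_nhdsWithin]
    with c hpot hc2 (hc : 0 < c) k
  rw [block_term_eq hq.1 hc (hℒ.pos c hc).ne' k]
  have hden : 0 < c ^ (-a) * ℒ c := mul_pos (Real.rpow_pos_of_pos hc _) (hℒ.pos c hc)
  have hqk : 0 < q ^ (k + 1) * c := mul_pos (pow_pos hq.1 _) hc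
  have hstep := pow_succ_mul_le_pow_mul hq hc.le k
  have hmono : F (q ^ k * c) ≤ F (q ^ (k + 1) * c) :=
    hFanti (mem_Ioi.2 hqk) (mem_Ioi.2 (hqk.trans_le hstep)) hstep
  have hqp : 0 ≤ (q ^ p) ^ k := pow_nonneg (Real.rpow_nonneg hq.1.le p) k
  calc ‖(q ^ p) ^ k * (F (q ^ (k + 1) * c) / (c ^ (-a) * ℒ c) - F (q ^ k * c) / (c ^ (-a) * ℒ c))‖
      ≤ (q ^ p) ^ k * (F (q ^ (k + 1) * c) / (c ^ (-a) * ℒ c)) := by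
        rw [Real.norm_eq_abs, abs_of_nonneg (mul_nonneg hqp (sub_nonneg.2
          (div_le_div_of_nonneg_right hmono hden.le)))]
        exact mul_le_mul_of_nonneg_left (sub_le_self _ (div_nonneg (hF0 _) hden.le)) hqp
    _ ≤ (q ^ p) ^ k * (K ^ (k + 1) * (F c / (c ^ (-a) * ℒ c))) := by
        rw [← mul_div_assoc (K ^ (k + 1))]
        exact mul_le_mul_of_nonneg_left (div_le_div_of_nonneg_right (hpot _) hden.le) hqp
    _ ≤ (q ^ p) ^ k * (K ^ (k + 1) * (2 * L)) := by gcongr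
    _ = K * (2 * L) * (q ^ ((p - a) / 2)) ^ k := by rw [← hqK, mul_pow]; ring

lemma tendsto_tsum_block_terms (hℒ : IsSlowlyVaryingAtZero ℒ)
    (hF : Tendsto (fun s => F s / (s ^ (-a) * ℒ s)) (𝓝[>] 0) (𝓝 L)) (hL : 0 < L)
    (hF0 : ∀ s, 0 ≤ F s) (hFanti : AntitoneOn F (Ioi 0)) (hap : a < p)
    (hq : q ∈ Ioo (0 : ℝ) 1) :
    (∀ᶠ c in 𝓝[>] 0, Summable fun k : ℕ =>
      (q ^ k * c) ^ p * (F (q ^ (k + 1) * c) - F (q ^ k * c)) / (c ^ (p - a) * ℒ c)) ∧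
    Tendsto (fun c => ∑' k : ℕ,
      (q ^ k * c) ^ p * (F (q ^ (k + 1) * c) - F (q ^ k * c)) / (c ^ (p - a) * ℒ c))
      (𝓝[>] 0) (𝓝 (L * ((q ^ (-a) - 1) / (1 - q ^ (p - a))))) := by
  obtain ⟨C, hC⟩ := eventually_norm_block_term_le hℒ hF hL hF0 hFanti hap hq
  have hgeom : Summable fun k : ℕ => C * (q ^ ((p - a) / 2)) ^ k :=
    (summable_geometric_of_lt_one (Real.rpow_nonneg hq.1.le _)
      (Real.rpow_lt_one hq.1.le hq.2 (by linarith))).mul_left C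
  refine ⟨hC.mono fun c hc => hgeom.of_norm_bounded hc, ?_⟩
  have hsum : ∑' k : ℕ, L * (q ^ (-a) - 1) * (q ^ (p - a)) ^ k =
      L * ((q ^ (-a) - 1) / (1 - q ^ (p - a))) := by
    rw [tsum_mul_left, tsum_geometric_of_lt_one (Real.rpow_nonneg hq.1.le _)
      (Real.rpow_lt_one hq.1.le hq.2 (by linarith))]
    ring
  rw [← hsum]
  exact tendsto_tsum_of_dominated_convergence hgeom (tendsto_block_term hℒ hF hq.1) hC

end BlockSums

section Karamata

variable {ν : Measure ℝ} {ℒ : ℝ → ℝ} {a p L q c : ℝ}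

lemma Ioc_zero_eq_iUnion_Ioc_pow_mul (hq : q ∈ Ioo (0 : ℝ) 1) (hc : 0 < c) :
    Ioc 0 c = ⋃ k : ℕ, Ioc (q ^ (k + 1) * c) (q ^ k * c) := by
  ext r
  simp only [mem_Ioc, mem_iUnion]
  constructor
  · rintro ⟨hr0, hrc⟩
    obtain ⟨k, hk1, hk2⟩ := exists_nat_pow_near_of_lt_one (div_pos hr0 hc)
      ((div_le_one hc).2 hrc) hq.1 hq.2
    exact ⟨k, (lt_div_iff₀ hc).1 hk1, (div_le_iff₀ hc).1 hk2⟩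
  · rintro ⟨k, hk1, hk2⟩
    exact ⟨(mul_pos (pow_pos hq.1 _) hc).trans hk1,
      hk2.trans (mul_le_of_le_one_left hc.le (pow_le_one₀ hq.1.le hq.2.le))⟩

lemma pairwise_disjoint_Ioc_pow_mul (hq : q ∈ Ioo (0 : ℝ) 1) (hc : 0 < c) :
    Pairwise (Disjoint on fun k : ℕ => Ioc (q ^ (k + 1) * c) (q ^ k * c)) := by
  have hanti : Antitone fun k : ℕ => q ^ k * c := antitone_nat_of_succ_le
    (pow_succ_mul_le_pow_mul hq hc.le)
  simpa only [Order.succ_eq_add_one] using hanti.pairwise_disjoint_on_Ioc_succ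

lemma lintegral_Ioc_rpow_bounds (hp : 0 ≤ p) (hq : q ∈ Ioo (0 : ℝ) 1) (hc : 0 < c) :
    ENNReal.ofReal (q ^ p) * ∑' k : ℕ,
        ENNReal.ofReal ((q ^ k * c) ^ p) * ν (Ioc (q ^ (k + 1) * c) (q ^ k * c)) ≤
      ∫⁻ r in Ioc 0 c, ENNReal.ofReal (r ^ p) ∂ν ∧
    ∫⁻ r in Ioc 0 c, ENNReal.ofReal (r ^ p) ∂ν ≤ ∑' k : ℕ,
        ENNReal.ofReal ((q ^ k * c) ^ p) * ν (Ioc (q ^ (k + 1) * c) (q ^ k * c)) := by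
  rw [Ioc_zero_eq_iUnion_Ioc_pow_mul hq hc,
    lintegral_iUnion (fun k => measurableSet_Ioc) (pairwise_disjoint_Ioc_pow_mul hq hc),
    ← ENNReal.tsum_mul_left]
  have hpos : ∀ k : ℕ, 0 < q ^ k * c := fun k => mul_pos (pow_pos hq.1 k) hc
  constructor
  · refine ENNReal.tsum_le_tsum fun k => ?_
    rw [← mul_assoc, ← ENNReal.ofReal_mul (Real.rpow_nonneg hq.1.le p),
      ← Real.mul_rpow hq.1.le (hpos k).le, ← mul_assoc, ← pow_succ', ← setLIntegral_const]
    exact setLIntegral_mono' measurableSet_Ioc fun r hr =>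
      ENNReal.ofReal_le_ofReal (Real.rpow_le_rpow (hpos _).le hr.1.le hp)
  · refine ENNReal.tsum_le_tsum fun k => ?_
    rw [← setLIntegral_const]
    exact setLIntegral_mono' measurableSet_Ioc fun r hr =>
      ENNReal.ofReal_le_ofReal (Real.rpow_le_rpow ((hpos _).trans hr.1).le hr.2 hp)

lemma measure_Ioc_eq_ofReal_sub {x y : ℝ} (hx : ν (Ioi x) ≠ ⊤) (hxy : x ≤ y) :
    ν (Ioc x y) = ENNReal.ofReal ((ν (Ioi x)).toReal - (ν (Ioi y)).toReal) := by
  have hsub : Ioi y ⊆ Ioi x := Ioi_subset_Ioi hxy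
  rw [← Ioi_sdiff_Ioi, measure_sdiff hsub measurableSet_Ioi.nullMeasurableSet
      (ne_top_of_le_ne_top hx (measure_mono hsub)),
    ENNReal.ofReal_sub _ ENNReal.toReal_nonneg, ENNReal.ofReal_toReal hx,
    ENNReal.ofReal_toReal (ne_top_of_le_ne_top hx (measure_mono hsub))]

lemma measure_Ioi_ne_top_of_tendsto (hℒ : IsSlowlyVaryingAtZero ℒ)
    (hν : Tendsto (fun s => (ν (Ioi s)).toReal / (s ^ (-a) * ℒ s)) (𝓝[>] 0) (𝓝 L))
    (hL : 0 < L) {s : ℝ} (hs : 0 < s) : ν (Ioi s) ≠ ⊤ := by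
  obtain ⟨t, ht, hts⟩ := ((hℒ.eventually_pos hν hL).and (Ioo_mem_nhdsGT hs)).exists
  exact ne_top_of_le_ne_top (ENNReal.toReal_pos_iff.1 ht).2.ne
    (measure_mono (Ioi_subset_Ioi hts.2.le))

lemma lintegral_Ioc_rpow_toReal_bounds (hfin : ∀ s, 0 < s → ν (Ioi s) ≠ ⊤) (hp : 0 ≤ p)
    (hq : q ∈ Ioo (0 : ℝ) 1) (hc : 0 < c)
    (hsum : Summable fun k : ℕ =>
      (q ^ k * c) ^ p * ((ν (Ioi (q ^ (k + 1) * c))).toReal - (ν (Ioi (q ^ k * c))).toReal)) :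
    q ^ p * ∑' k : ℕ,
        (q ^ k * c) ^ p * ((ν (Ioi (q ^ (k + 1) * c))).toReal - (ν (Ioi (q ^ k * c))).toReal) ≤
      (∫⁻ r in Ioc 0 c, ENNReal.ofReal (r ^ p) ∂ν).toReal ∧
    (∫⁻ r in Ioc 0 c, ENNReal.ofReal (r ^ p) ∂ν).toReal ≤ ∑' k : ℕ,
        (q ^ k * c) ^ p * ((ν (Ioi (q ^ (k + 1) * c))).toReal - (ν (Ioi (q ^ k * c))).toReal) := by
  have hpos : ∀ k : ℕ, 0 < q ^ k * c := fun k => mul_pos (pow_pos hq.1 k) hc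
  have hstep := pow_succ_mul_le_pow_mul hq hc.le
  have hterm_nonneg : ∀ k : ℕ, 0 ≤ (q ^ k * c) ^ p *
      ((ν (Ioi (q ^ (k + 1) * c))).toReal - (ν (Ioi (q ^ k * c))).toReal) := fun k =>
    mul_nonneg (Real.rpow_nonneg (hpos k).le p) (sub_nonneg.2 (ENNReal.toReal_mono
      (hfin _ (hpos (k + 1))) (measure_mono (Ioi_subset_Ioi (hstep k)))))
  obtain ⟨hlo, hup⟩ := lintegral_Ioc_rpow_bounds (ν := ν) hp hq hc
  simp_rw [measure_Ioc_eq_ofReal_sub (hfin _ (hpos _)) (hstep _),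
    ← ENNReal.ofReal_mul (Real.rpow_nonneg (hpos _).le p),
    ← ENNReal.ofReal_tsum_of_nonneg hterm_nonneg hsum,
    ← ENNReal.ofReal_mul (Real.rpow_nonneg hq.1.le p)] at hlo hup
  have hfinI := ne_top_of_le_ne_top ENNReal.ofReal_ne_top hup
  exact ⟨(ENNReal.ofReal_le_iff_le_toReal hfinI).1 hlo,
    ENNReal.toReal_le_of_le_ofReal (tsum_nonneg hterm_nonneg) hup⟩

theorem tendsto_lintegral_Ioc_rpow (hℒ : IsSlowlyVaryingAtZero ℒ) (ha : 0 < a) (hap : a < p)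
    (hL : 0 < L)
    (hν : Tendsto (fun s => (ν (Ioi s)).toReal / (s ^ (-a) * ℒ s)) (𝓝[>] 0) (𝓝 L)) :
    Tendsto (fun c => (∫⁻ r in Ioc 0 c, ENNReal.ofReal (r ^ p) ∂ν).toReal / (c ^ (p - a) * ℒ c))
      (𝓝[>] 0) (𝓝 (L * (a / (p - a)))) := by
  have hfin : ∀ s, 0 < s → ν (Ioi s) ≠ ⊤ := fun s => measure_Ioi_ne_top_of_tendsto hℒ hν hL
  have hp : 0 ≤ p := (ha.trans hap).le
  set S : ℝ → ℝ → ℝ := fun q c => ∑' k : ℕ,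
    (q ^ k * c) ^ p * ((ν (Ioi (q ^ (k + 1) * c))).toReal - (ν (Ioi (q ^ k * c))).toReal) /
      (c ^ (p - a) * ℒ c)
  have hR := (tendsto_rpow_neg_sub_one_div_one_sub_rpow (a := a) (sub_pos.2 hap)).const_mul L
  refine tendsto_of_squeeze_family (p := 𝓝[<] 1) (g := fun q c => q ^ p * S q c) (h := S)
    (A := fun q => q ^ p * (L * ((q ^ (-a) - 1) / (1 - q ^ (p - a)))))
    (B := fun q => L * ((q ^ (-a) - 1) / (1 - q ^ (p - a)))) ?_ ?_ hR
  · filter_upwards [Ioo_mem_nhdsLT (show (0 : ℝ) < 1 by norm_num)] with q hq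
    obtain ⟨hsum, hlim⟩ := tendsto_tsum_block_terms hℒ hν hL (fun _ => ENNReal.toReal_nonneg)
      (fun s hs t _ hst => ENNReal.toReal_mono (hfin s hs) (measure_mono (Ioi_subset_Ioi hst)))
      hap hq
    refine ⟨?_, hlim.const_mul _, hlim⟩
    filter_upwards [hsum, self_mem_nhdsWithin] with c hc (hc0 : 0 < c)
    have hden : 0 < c ^ (p - a) * ℒ c := mul_pos (Real.rpow_pos_of_pos hc0 _) (hℒ.pos c hc0)
    obtain ⟨hlo, hup⟩ := lintegral_Ioc_rpow_toReal_bounds hfin hp hq hc0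
      ((summable_div_const_iff hden.ne').1 hc)
    simp only [S, tsum_div_const, ← mul_div_assoc]
    exact ⟨div_le_div_of_nonneg_right hlo hden.le, div_le_div_of_nonneg_right hup hden.le⟩
  · simpa using ((Real.continuousAt_rpow_const 1 p (Or.inl one_ne_zero)).tendsto.mono_left
      nhdsWithin_le_nhds).mul hR

theorem tendsto_lintegral_Ioo_rpow_of_pos (hℒ : IsSlowlyVaryingAtZero ℒ) (ha : 0 < a)
    (hap : a < p) (hL : 0 < L)
    (hν : Tendsto (fun s => (ν (Ioi s)).toReal / (s ^ (-a) * ℒ s)) (𝓝[>] 0) (𝓝 L)) :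
    Tendsto (fun c => (∫⁻ r in Ioo 0 c, ENNReal.ofReal (r ^ p) ∂ν).toReal / (c ^ (p - a) * ℒ c))
      (𝓝[>] 0) (𝓝 (L * (a / (p - a)))) := by
  have hIoc := tendsto_lintegral_Ioc_rpow hℒ ha hap hL hν
  refine hℒ.tendsto_of_le_of_le_comp_mul hIoc fun q hq => ?_
  filter_upwards [hℒ.eventually_pos hIoc (mul_pos hL (div_pos ha (sub_pos.2 hap))),
    self_mem_nhdsWithin] with c hc (hc0 : 0 < c)
  have hfin := (ENNReal.toReal_pos_iff.1 hc).2.ne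
  have hsub : Ioc 0 (q * c) ⊆ Ioo 0 c := Ioc_subset_Ioo_right (mul_lt_of_lt_one_left hc0 hq.2)
  exact ⟨ENNReal.toReal_mono (ne_top_of_le_ne_top hfin (lintegral_mono_set Ioo_subset_Ioc_self))
      (lintegral_mono_set hsub),
    ENNReal.toReal_mono hfin (lintegral_mono_set Ioo_subset_Ioc_self)⟩

theorem tendsto_lintegral_Ioo_rpow (hℒ : IsSlowlyVaryingAtZero ℒ) (ha : 0 < a) (hap : a < p)
    {νu : Measure ℝ} {Lu : ℝ} (hLu : 0 < Lu)
    (hνu : Tendsto (fun s => (νu (Ioi s)).toReal / (s ^ (-a) * ℒ s)) (𝓝[>] 0) (𝓝 Lu))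
    (hfin : ∀ s, 0 < s → ν (Ioi s) ≠ ⊤)
    (hν : Tendsto (fun s => (ν (Ioi s)).toReal / (s ^ (-a) * ℒ s)) (𝓝[>] 0) (𝓝 L)) :
    Tendsto (fun c => (∫⁻ r in Ioo 0 c, ENNReal.ofReal (r ^ p) ∂ν).toReal / (c ^ (p - a) * ℒ c))
      (𝓝[>] 0) (𝓝 (L * (a / (p - a)))) := by
  have hL : 0 ≤ L := ge_of_tendsto hν <| eventually_nhdsWithin_of_forall fun s (hs : 0 < s) =>
    div_nonneg ENNReal.toReal_nonneg (mul_pos (Real.rpow_pos_of_pos hs _) (hℒ.pos s hs)).le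
  have hfinu : ∀ s, 0 < s → νu (Ioi s) ≠ ⊤ := fun s => measure_Ioi_ne_top_of_tendsto hℒ hνu hLu
  have hsum : Tendsto (fun s => ((ν + νu) (Ioi s)).toReal / (s ^ (-a) * ℒ s)) (𝓝[>] 0)
      (𝓝 (L + Lu)) := by
    refine (hν.add hνu).congr' (eventually_nhdsWithin_of_forall fun s (hs : 0 < s) => ?_)
    dsimp only
    rw [Measure.add_apply, ENNReal.toReal_add (hfin s hs) (hfinu s hs), add_div]
  have hI := tendsto_lintegral_Ioo_rpow_of_pos hℒ ha hap (by linarith) hsum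
  have hIu := tendsto_lintegral_Ioo_rpow_of_pos (p := p) hℒ ha hap hLu hνu
  rw [show L * (a / (p - a)) = (L + Lu) * (a / (p - a)) - Lu * (a / (p - a)) by ring]
  refine (hI.sub hIu).congr' ?_
  filter_upwards [hℒ.eventually_pos hI (mul_pos (by linarith) (div_pos ha (sub_pos.2 hap)))]
    with c hc
  rw [Measure.restrict_add, lintegral_add_measure] at hc ⊢
  obtain ⟨h1, h2⟩ := ENNReal.add_ne_top.1 (ENNReal.toReal_pos_iff.1 hc).2.ne
  rw [ENNReal.toReal_add h1 h2, add_div, add_sub_cancel_right]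

end Karamata

section Cones

variable {d : ℕ}

def dirCone (D : Set (Metric.sphere (0 : Rd d) 1)) : Set (Rd d) :=
  (fun x : Rd d => ‖x‖⁻¹ • x) ⁻¹' (Subtype.val '' D)

def radialMeasure (M : Measure (Rd d)) (D : Set (Metric.sphere (0 : Rd d) 1)) : Measure ℝ :=
  (M.restrict (dirCone D)).map norm

lemma measurableSet_dirCone {D : Set (Metric.sphere (0 : Rd d) 1)} (hD : MeasurableSet D) :
    MeasurableSet (dirCone D) :=
  (measurable_norm.inv.smul measurable_id)
    (Metric.isClosed_sphere.measurableSet.subtype_image hD)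

lemma cone_eq_inter (D : Set (Metric.sphere (0 : Rd d) 1)) (t : ℝ) :
    cone D t = norm ⁻¹' Ioi t ∩ dirCone D := by
  ext x
  simp only [cone, dirCone, mem_inter_iff, mem_ofPred_eq, mem_preimage, mem_Ioi, mem_image]
  constructor
  · rintro ⟨ht, _, hD⟩
    exact ⟨ht, _, hD, rfl⟩
  · rintro ⟨ht, ⟨y, hy⟩, hyD, rfl⟩
    exact ⟨ht, hy, hyD⟩

lemma radialMeasure_Ioi (M : Measure (Rd d)) (D : Set (Metric.sphere (0 : Rd d) 1)) (t : ℝ) :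
    radialMeasure M D (Ioi t) = M (cone D t) := by
  rw [radialMeasure, Measure.map_apply measurable_norm measurableSet_Ioi,
    Measure.restrict_apply (measurable_norm measurableSet_Ioi), cone_eq_inter]

lemma radialMeasure_mono (M : Measure (Rd d)) {D D' : Set (Metric.sphere (0 : Rd d) 1)}
    (h : D ⊆ D') : radialMeasure M D ≤ radialMeasure M D' :=
  Measure.map_mono (Measure.restrict_mono (preimage_mono (image_mono h)) le_rfl) measurable_norm

lemma norm_sphInv (x : Rd d) : ‖sphInv x‖ = ‖x‖⁻¹ := by
  simpa [sphInv, norm_smul, sq] using mul_self_mul_inv ‖x‖⁻¹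

lemma norm_sphInv_inv_smul (x : Rd d) : ‖sphInv x‖⁻¹ • sphInv x = ‖x‖⁻¹ • x := by
  rw [norm_sphInv, inv_inv, sphInv, smul_smul]
  congr 1
  simpa [sq, mul_assoc] using inv_mul_mul_self ‖x‖⁻¹

lemma measurable_sphInv : Measurable (sphInv (d := d)) :=
  ((measurable_norm.pow_const 2).inv).smul measurable_id

lemma preimage_sphInv_cone (D : Set (Metric.sphere (0 : Rd d) 1)) {t : ℝ} (ht : 0 < t) :
    sphInv ⁻¹' cone D t = norm ⁻¹' Ioo 0 t⁻¹ ∩ dirCone D := by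
  rw [cone_eq_inter, dirCone, preimage_inter, preimage_preimage, preimage_preimage]
  simp only [norm_sphInv_inv_smul]
  ext x
  simp only [mem_inter_iff, mem_preimage, mem_Ioi, mem_Ioo, norm_sphInv]
  rcases (norm_nonneg x).eq_or_lt with hx | hx
  · simp [← hx]
  · rw [lt_inv_comm₀ ht hx]
    simp [hx]

lemma betaInv_cone (β : ℝ) (M : Measure (Rd d)) {D : Set (Metric.sphere (0 : Rd d) 1)}
    (hD : MeasurableSet D) {t : ℝ} (ht : 0 < t) :
    betaInv β M (cone D t) =
      ∫⁻ r in Ioo 0 t⁻¹, ENNReal.ofReal (r ^ (2 + β)) ∂radialMeasure M D := by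
  have hcone : MeasurableSet (cone D t) := by
    rw [cone_eq_inter]; exact (measurable_norm measurableSet_Ioi).inter (measurableSet_dirCone hD)
  rw [betaInv, Measure.map_apply measurable_sphInv hcone,
    withDensity_apply _ (measurable_sphInv hcone), preimage_sphInv_cone D ht,
    ← Measure.restrict_restrict (measurable_norm measurableSet_Ioo), radialMeasure,
    setLIntegral_map measurableSet_Ioo (by fun_prop) measurable_norm]

end Cones

theorem stmt7_general {d : ℕ} (β ρ : ℝ)
    (hρ : ρ ∈ Set.Ioo (-(2 + β)) 0)
    (M : Measure (Rd d))
    (σ : Measure (Metric.sphere (0 : Rd d) 1)) [IsFiniteMeasure σ] (hσ : σ ≠ 0)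
    (ℓ : ℝ → ℝ) (hℓpos : ∀ t : ℝ, 0 < t → 0 < ℓ t)
    (hℓ : ∀ x : ℝ, 0 < x → Tendsto (fun t => ℓ (t * x) / ℓ t) atTop (𝓝 1))
    (hyp : ∀ D : Set (Metric.sphere (0 : Rd d) 1), MeasurableSet D → σ (frontier D) = 0 →
      Tendsto (fun t : ℝ => (M (cone D t)).toReal / (t ^ (-(ρ + 2 + β)) * ℓ (1 / t)))
        (𝓝[>] 0) (𝓝 (σ D).toReal)) :
    ∀ D : Set (Metric.sphere (0 : Rd d) 1), MeasurableSet D → σ (frontier D) = 0 →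
      Tendsto (fun t : ℝ => (betaInv β M (cone D t)).toReal / (t ^ ρ * ℓ t))
        atTop (𝓝 ((ρ + 2 + β) / |ρ| * (σ D).toReal)) := by
  intro D hD hDfr
  have hℒ := isSlowlyVaryingAtZero_one_div hℓpos hℓ
  have htail : ∀ D' : Set (Metric.sphere (0 : Rd d) 1), MeasurableSet D' →
      σ (frontier D') = 0 → Tendsto (fun s => (radialMeasure M D' (Ioi s)).toReal /
        (s ^ (-(ρ + 2 + β)) * ℓ (1 / s))) (𝓝[>] 0) (𝓝 (σ D').toReal) := fun D' hD' hfr => by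
    simpa only [radialMeasure_Ioi] using hyp D' hD' hfr
  have hσuniv : 0 < (σ univ).toReal :=
    ENNReal.toReal_pos (by simpa using hσ) (measure_ne_top σ univ)
  have hU := htail univ MeasurableSet.univ (by simp)
  have hfin : ∀ s, 0 < s → radialMeasure M D (Ioi s) ≠ ⊤ := fun s hs =>
    ne_top_of_le_ne_top (measure_Ioi_ne_top_of_tendsto hℒ hU hσuniv hs)
      (radialMeasure_mono M (subset_univ D) _)
  have hK := tendsto_lintegral_Ioo_rpow (p := 2 + β) hℒ (by linarith [hρ.1]) (by linarith [hρ.2])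
    hσuniv hU hfin (htail D hD hDfr)
  rw [show (σ D).toReal * ((ρ + 2 + β) / (2 + β - (ρ + 2 + β))) =
      (ρ + 2 + β) / |ρ| * (σ D).toReal by rw [abs_of_neg hρ.2]; ring] at hK
  refine (hK.comp tendsto_inv_atTop_nhdsGT_zero).congr' ?_
  filter_upwards [eventually_gt_atTop 0] with t ht
  rw [Function.comp_apply, betaInv_cone β M hD ht, one_div, inv_inv, Real.inv_rpow ht.le,
    ← Real.rpow_neg ht.le]
  ring_nf

theorem stmt7 {d : ℕ} (β ρ : ℝ) (hβ : β ∈ Set.Icc (0 : ℝ) 2)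
    (hρ : ρ ∈ Set.Ioo (-(2 + β)) 0)
    (M : Measure (Rd d)) (hM : MemM β M)
    (σ : Measure (Metric.sphere (0 : Rd d) 1)) [IsFiniteMeasure σ] (hσ : σ ≠ 0)
    (ℓ : ℝ → ℝ) (hℓpos : ∀ t : ℝ, 0 < t → 0 < ℓ t)
    (hℓ : ∀ x : ℝ, 0 < x → Tendsto (fun t => ℓ (t * x) / ℓ t) atTop (𝓝 1))
    (hyp : ∀ D : Set (Metric.sphere (0 : Rd d) 1), MeasurableSet D → σ (frontier D) = 0 →
      Tendsto (fun t : ℝ => (M (cone D t)).toReal / (t ^ (-(ρ + 2 + β)) * ℓ (1 / t)))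
        (𝓝[>] 0) (𝓝 (σ D).toReal)) :
    ∀ D : Set (Metric.sphere (0 : Rd d) 1), MeasurableSet D → σ (frontier D) = 0 →
      Tendsto (fun t : ℝ => (betaInv β M (cone D t)).toReal / (t ^ ρ * ℓ t))
        atTop (𝓝 ((ρ + 2 + β) / |ρ| * (σ D).toReal)) :=
  stmt7_general β ρ hρ M σ hσ ℓ hℓpos hℓ hyp
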